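/- arXiv:1010.6036 — 2 statements merged into one kernel-verified Lean document; each statement's English description precedes it below -/
import Mathlib

section
/- Let G = G₁ ∪ G₂ where G₁ ∩ G₂ is a complete graph (a clique sum). Then t(G) = max{t(G₁), t(G₂)}, where t is the hypersphere number. -/
open scoped RealInnerProductSpace

def IsUnitDistRep {V : Type*} (G : SimpleGraph V) {d : ℕ}
    (u : V → EuclideanSpace ℝ (Fin d)) : Prop :=
  ∀ i j, G.Adj i j → ‖u i - u j‖ = 1

def IsHypersphereRep {V : Type*} (G : SimpleGraph V) {d : ℕ}
    (u : V → EuclideanSpace ℝ (Fin d)) (t : ℝ) : Prop :=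
  IsUnitDistRep G u ∧ ∀ i, ‖u i‖ ^ 2 = t

noncomputable def hypersphereNumber {V : Type*} (G : SimpleGraph V) : ℝ :=
  sInf {t | ∃ (d : ℕ) (u : V → EuclideanSpace ℝ (Fin d)), IsHypersphereRep G u t}

/-!
A representation of `G₁ ∪ G₂` restricts to representations of `G₁` and `G₂`, which gives
`t(G₁ ∪ G₂) ≥ max (t(G₁), t(G₂))`. Conversely, a representation of squared radius `t` can be
moved to any squared radius `s ≥ t` by appending an orthogonal coordinate `√(s - t)`, so
representations of `G₁` and `G₂` can be placed on one sphere in one space. On that sphere the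
images of the common clique have the same Gram matrix (`t` on the diagonal, `t - 1/2` off it), so
a linear isometry carries one onto the other, and the two representations glue along the clique.
-/

theorem LinearMap.exists_linearIsometry_comp_eq_of_norm_eq {𝕜 M E : Type*} [RCLike 𝕜]
    [AddCommGroup M] [Module 𝕜 M] [NormedAddCommGroup E] [InnerProductSpace 𝕜 E]
    [FiniteDimensional 𝕜 E] (A B : M →ₗ[𝕜] E) (h : ∀ c, ‖B c‖ = ‖A c‖) :
    ∃ O : E →ₗᵢ[𝕜] E, ∀ c, O (A c) = B c := by
  have hker : LinearMap.ker A ≤ LinearMap.ker B := fun c hc => by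
    rw [LinearMap.mem_ker, ← norm_eq_zero, h c, norm_eq_zero, ← LinearMap.mem_ker]
    exact hc
  let L₀ := (LinearMap.ker A).liftQ B hker ∘ₗ A.quotKerEquivRange.symm.toLinearMap
  have hL₀ : ∀ c, L₀ ⟨A c, LinearMap.mem_range_self A c⟩ = B c := fun c => by
    simp [L₀, LinearMap.quotKerEquivRange_symm_apply_image]
  let L : LinearMap.range A →ₗᵢ[𝕜] E :=
    { toLinearMap := L₀
      norm_map' := by
        rintro ⟨_, c, rfl⟩
        exact (congrArg norm (hL₀ c)).trans (h c) }
  exact ⟨L.extend, fun c => (L.extend_apply ⟨A c, LinearMap.mem_range_self A c⟩).trans (hL₀ c)⟩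

theorem exists_linearIsometry_of_inner_eq {𝕜 ι E : Type*} [RCLike 𝕜] [NormedAddCommGroup E]
    [InnerProductSpace 𝕜 E] [FiniteDimensional 𝕜 E] (f g : ι → E)
    (h : ∀ i j, inner 𝕜 (f i) (f j) = inner 𝕜 (g i) (g j)) :
    ∃ O : E →ₗᵢ[𝕜] E, ∀ i, O (g i) = f i := by
  have hinner : ∀ c : ι →₀ 𝕜,
      inner 𝕜 (Finsupp.linearCombination 𝕜 f c) (Finsupp.linearCombination 𝕜 f c) =
        inner 𝕜 (Finsupp.linearCombination 𝕜 g c) (Finsupp.linearCombination 𝕜 g c) := by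
    intro c
    simp only [Finsupp.linearCombination_apply, Finsupp.sum, sum_inner, inner_sum,
      inner_smul_left, inner_smul_right, h]
  obtain ⟨O, hO⟩ := LinearMap.exists_linearIsometry_comp_eq_of_norm_eq
    (Finsupp.linearCombination 𝕜 g) (Finsupp.linearCombination 𝕜 f) fun c => by
      simp only [@norm_eq_sqrt_re_inner 𝕜, hinner]
  exact ⟨O, fun i => by simpa using hO (Finsupp.single i 1)⟩

-- `IsHypersphereRep` with `EuclideanSpace ℝ (Fin d)` generalised to any normed group, so that
-- representations can be built in products and moved by isometries.
def IsSphericalRep {V E : Type*} [NormedAddCommGroup E] (G : SimpleGraph V) (u : V → E)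
    (t : ℝ) : Prop :=
  (∀ i j, G.Adj i j → ‖u i - u j‖ = 1) ∧ ∀ i, ‖u i‖ ^ 2 = t

theorem IsHypersphereRep.isSphericalRep {V : Type*} {G : SimpleGraph V} {d : ℕ}
    {u : V → EuclideanSpace ℝ (Fin d)} {t : ℝ} (hu : IsHypersphereRep G u t) :
    IsSphericalRep G u t :=
  hu

namespace IsSphericalRep

variable {V E F : Type*} [NormedAddCommGroup E] [NormedAddCommGroup F]
  {G H G₁ G₂ : SimpleGraph V} {V₁ V₂ : Set V} {u u₁ u₂ : V → E} {t : ℝ}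

theorem mono (hu : IsSphericalRep G u t) (hHG : H ≤ G) : IsSphericalRep H u t :=
  ⟨fun i j hij => hu.1 i j (hHG hij), hu.2⟩

theorem prod_const (hu : IsSphericalRep G u t) (c : F) {s : ℝ} (hs : t + ‖c‖ ^ 2 = s) :
    IsSphericalRep G (fun i => WithLp.toLp 2 (u i, c)) s := by
  refine ⟨fun i j hij => ?_, fun i => ?_⟩
  · rw [← sq_eq_sq₀ (norm_nonneg _) zero_le_one, ← WithLp.toLp_sub,
      WithLp.prod_norm_sq_eq_of_L2]
    simp [hu.1 i j hij]
  · simp [WithLp.prod_norm_sq_eq_of_L2, hu.2 i, hs]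

theorem const_prod (hu : IsSphericalRep G u t) (c : F) {s : ℝ} (hs : ‖c‖ ^ 2 + t = s) :
    IsSphericalRep G (fun i => WithLp.toLp 2 (c, u i)) s := by
  refine ⟨fun i j hij => ?_, fun i => ?_⟩
  · rw [← sq_eq_sq₀ (norm_nonneg _) zero_le_one, ← WithLp.toLp_sub,
      WithLp.prod_norm_sq_eq_of_L2]
    simp [hu.1 i j hij]
  · simp [WithLp.prod_norm_sq_eq_of_L2, hu.2 i, hs]

theorem exists_sup_of_eqOn (h₁ : IsSphericalRep G₁ u₁ t) (h₂ : IsSphericalRep G₂ u₂ t)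
    (hcover : V₁ ∪ V₂ = Set.univ) (hE₁ : ∀ i j, G₁.Adj i j → i ∈ V₁ ∧ j ∈ V₁)
    (hE₂ : ∀ i j, G₂.Adj i j → i ∈ V₂ ∧ j ∈ V₂) (hagree : Set.EqOn u₁ u₂ (V₁ ∩ V₂)) :
    ∃ u : V → E, IsSphericalRep (G₁ ⊔ G₂) u t := by
  classical
  have hw₁ : Set.EqOn (V₁.piecewise u₁ u₂) u₁ V₁ := fun i hi => V₁.piecewise_eq_of_mem _ _ hi
  have hw₂ : Set.EqOn (V₁.piecewise u₁ u₂) u₂ V₂ := fun i hi => by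
    by_cases hi₁ : i ∈ V₁
    · rw [hw₁ hi₁, hagree ⟨hi₁, hi⟩]
    · exact V₁.piecewise_eq_of_notMem _ _ hi₁
  refine ⟨V₁.piecewise u₁ u₂, fun i j hij => ?_, fun i => ?_⟩
  · rcases hij with hij | hij
    · obtain ⟨hi, hj⟩ := hE₁ i j hij
      rw [hw₁ hi, hw₁ hj, h₁.1 i j hij]
    · obtain ⟨hi, hj⟩ := hE₂ i j hij
      rw [hw₂ hi, hw₂ hj, h₂.1 i j hij]
  · rcases hcover.symm ▸ Set.mem_univ i with hi | hi
    · rw [hw₁ hi, h₁.2 i]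
    · rw [hw₂ hi, h₂.2 i]

variable [InnerProductSpace ℝ E] [InnerProductSpace ℝ F]

theorem inner_eq_of_adj (hu : IsSphericalRep G u t) {i j : V} (hij : G.Adj i j) :
    ⟪u i, u j⟫ = t - 1 / 2 := by
  have h := norm_sub_sq_real (u i) (u j)
  rw [hu.1 i j hij, hu.2 i, hu.2 j] at h
  linarith

theorem map (hu : IsSphericalRep G u t) (O : E →ₗᵢ[ℝ] F) : IsSphericalRep G (O ∘ u) t :=
  ⟨fun i j hij => by simpa [← map_sub] using hu.1 i j hij, fun i => by simpa using hu.2 i⟩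

theorem _root_.Orthonormal.isSphericalRep_top {b : V → E} (hb : Orthonormal ℝ b) :
    IsSphericalRep (⊤ : SimpleGraph V) (fun i => (√2)⁻¹ • b i) (1 / 2) := by
  have h2 : ((√2)⁻¹ : ℝ) ^ 2 = 1 / 2 := by rw [inv_pow, Real.sq_sqrt zero_le_two, one_div]
  refine ⟨fun i j hij => ?_, fun i => ?_⟩
  · rw [← sq_eq_sq₀ (norm_nonneg _) zero_le_one, ← smul_sub, norm_smul, mul_pow,
      norm_sub_sq_real, hb.1 i, hb.1 j, hb.inner_eq_zero hij.ne, Real.norm_eq_abs, sq_abs, h2]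
    norm_num
  · rw [norm_smul, mul_pow, hb.1 i, Real.norm_eq_abs, sq_abs, h2, one_pow, mul_one]

theorem exists_sup_of_isClique [FiniteDimensional ℝ E] (h₁ : IsSphericalRep G₁ u₁ t)
    (h₂ : IsSphericalRep G₂ u₂ t) (hcover : V₁ ∪ V₂ = Set.univ)
    (hE₁ : ∀ i j, G₁.Adj i j → i ∈ V₁ ∧ j ∈ V₁) (hE₂ : ∀ i j, G₂.Adj i j → i ∈ V₂ ∧ j ∈ V₂)
    (hclique : ∀ i ∈ V₁ ∩ V₂, ∀ j ∈ V₁ ∩ V₂, i ≠ j → G₁.Adj i j ∧ G₂.Adj i j) :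
    ∃ u : V → E, IsSphericalRep (G₁ ⊔ G₂) u t := by
  have hgram : ∀ i j : ↥(V₁ ∩ V₂), ⟪u₁ i, u₁ j⟫ = ⟪u₂ i, u₂ j⟫ := by
    rintro ⟨i, hi⟩ ⟨j, hj⟩
    by_cases hij : i = j
    · subst hij
      rw [real_inner_self_eq_norm_sq, real_inner_self_eq_norm_sq, h₁.2, h₂.2]
    · obtain ⟨hadj₁, hadj₂⟩ := hclique i hi j hj hij
      rw [h₁.inner_eq_of_adj hadj₁, h₂.inner_eq_of_adj hadj₂]
  obtain ⟨O, hO⟩ := exists_linearIsometry_of_inner_eq (fun i : ↥(V₁ ∩ V₂) => u₁ i) _ hgram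
  exact h₁.exists_sup_of_eqOn (h₂.map O) hcover hE₁ hE₂ fun i hi => (hO ⟨i, hi⟩).symm

end IsSphericalRep

theorem csInf_eq_max_of_max_mem {α : Type*} [ConditionallyCompleteLinearOrder α]
    {S A B : Set α} (hA : A.Nonempty) (hB : B.Nonempty) (hA' : BddBelow A) (hB' : BddBelow B)
    (hSA : S ⊆ A) (hSB : S ⊆ B) (hmax : ∀ a ∈ A, ∀ b ∈ B, max a b ∈ S) :
    sInf S = max (sInf A) (sInf B) := by
  obtain ⟨a₀, ha₀⟩ := hA
  obtain ⟨b₀, hb₀⟩ := hB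
  have hS : S.Nonempty := ⟨_, hmax a₀ ha₀ b₀ hb₀⟩
  have hS' : BddBelow S := hA'.mono hSA
  refine le_antisymm (not_lt.1 fun hlt => ?_)
    (le_csInf hS fun s hs => max_le (csInf_le hA' (hSA hs)) (csInf_le hB' (hSB hs)))
  obtain ⟨a, ha, has⟩ := exists_lt_of_csInf_lt ⟨a₀, ha₀⟩ ((le_max_left _ _).trans_lt hlt)
  obtain ⟨b, hb, hbs⟩ := exists_lt_of_csInf_lt ⟨b₀, hb₀⟩ ((le_max_right _ _).trans_lt hlt)
  exact (csInf_le hS' (hmax a ha b hb)).not_gt (max_lt has hbs)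

def hypersphereRadii {V : Type*} (G : SimpleGraph V) : Set ℝ :=
  {t | ∃ (d : ℕ) (u : V → EuclideanSpace ℝ (Fin d)), IsHypersphereRep G u t}

section hypersphereRadii

variable {V : Type*} {G H : SimpleGraph V}

theorem hypersphereNumber_eq_sInf_hypersphereRadii :
    hypersphereNumber G = sInf (hypersphereRadii G) := rfl

theorem IsSphericalRep.mem_hypersphereRadii {E : Type*} [NormedAddCommGroup E]
    [InnerProductSpace ℝ E] [FiniteDimensional ℝ E] {u : V → E} {t : ℝ}
    (hu : IsSphericalRep G u t) : t ∈ hypersphereRadii G :=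
  ⟨_, _, hu.map (stdOrthonormalBasis ℝ E).repr.toLinearIsometry⟩

theorem hypersphereRadii_anti (hHG : H ≤ G) : hypersphereRadii G ⊆ hypersphereRadii H :=
  fun _ ⟨_, _, hu⟩ => ⟨_, _, hu.isSphericalRep.mono hHG⟩

theorem one_half_mem_hypersphereRadii [Finite V] : 1 / 2 ∈ hypersphereRadii G := by
  classical
  have := Fintype.ofFinite V
  exact ((EuclideanSpace.orthonormal_single (𝕜 := ℝ) (ι := V)).isSphericalRep_top.mono
    le_top).mem_hypersphereRadii

theorem bddBelow_hypersphereRadii [Nonempty V] : BddBelow (hypersphereRadii G) :=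
  ⟨0, fun _ ⟨_, _, hu⟩ => hu.2 (Classical.arbitrary V) ▸ sq_nonneg _⟩

theorem hypersphereNumber_of_isEmpty [IsEmpty V] : hypersphereNumber G = 0 := by
  have : hypersphereRadii G = Set.univ :=
    Set.eq_univ_of_forall fun _ => ⟨0, isEmptyElim, isEmptyElim, isEmptyElim⟩
  rw [hypersphereNumber_eq_sInf_hypersphereRadii, this, Real.sInf_univ]

theorem mem_hypersphereRadii_sup {G₁ G₂ : SimpleGraph V} {V₁ V₂ : Set V}
    (hcover : V₁ ∪ V₂ = Set.univ) (hE₁ : ∀ i j, G₁.Adj i j → i ∈ V₁ ∧ j ∈ V₁)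
    (hE₂ : ∀ i j, G₂.Adj i j → i ∈ V₂ ∧ j ∈ V₂)
    (hclique : ∀ i ∈ V₁ ∩ V₂, ∀ j ∈ V₁ ∩ V₂, i ≠ j → G₁.Adj i j ∧ G₂.Adj i j)
    {t₁ t₂ s : ℝ} (ht₁ : t₁ ∈ hypersphereRadii G₁) (ht₂ : t₂ ∈ hypersphereRadii G₂)
    (hs₁ : t₁ ≤ s) (hs₂ : t₂ ≤ s) : s ∈ hypersphereRadii (G₁ ⊔ G₂) := by
  obtain ⟨d₁, u₁, hu₁⟩ := ht₁
  obtain ⟨d₂, u₂, hu₂⟩ := ht₂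
  have hlift : ∀ {t : ℝ}, t ≤ s → t + ‖(√(s - t) : ℝ)‖ ^ 2 = s := fun ht => by
    rw [Real.norm_eq_abs, sq_abs, Real.sq_sqrt (sub_nonneg.2 ht)]
    ring
  have hw₁ := (hu₁.isSphericalRep.prod_const (0 : EuclideanSpace ℝ (Fin d₂)) (by simp)).prod_const
    _ (hlift hs₁)
  have hw₂ := (hu₂.isSphericalRep.const_prod (0 : EuclideanSpace ℝ (Fin d₁)) (by simp)).prod_const
    _ (hlift hs₂)
  obtain ⟨w, hw⟩ := hw₁.exists_sup_of_isClique hw₂ hcover hE₁ hE₂ hclique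
  exact hw.mem_hypersphereRadii

end hypersphereRadii

/-- Clique sums: if `G = G₁ ∪ G₂` where the common part `G₁ ∩ G₂` is a complete graph,
then `t(G) = max {t(G₁), t(G₂)}`. Here `G₁`, `G₂` are graphs on vertex sets `V₁`, `V₂`
(with no edges leaving them), covering the whole vertex set, such that any two distinct
vertices of `V₁ ∩ V₂` are adjacent in both graphs. -/
theorem hypersphereNumber_cliqueSum {V : Type*} [Fintype V]
    (G₁ G₂ : SimpleGraph V) (V₁ V₂ : Set V)
    (hcover : V₁ ∪ V₂ = Set.univ)
    (hE₁ : ∀ i j, G₁.Adj i j → i ∈ V₁ ∧ j ∈ V₁)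
    (hE₂ : ∀ i j, G₂.Adj i j → i ∈ V₂ ∧ j ∈ V₂)
    (hclique : ∀ i ∈ V₁ ∩ V₂, ∀ j ∈ V₁ ∩ V₂, i ≠ j → G₁.Adj i j ∧ G₂.Adj i j) :
    hypersphereNumber (G₁ ⊔ G₂) = max (hypersphereNumber G₁) (hypersphereNumber G₂) := by
  rcases isEmpty_or_nonempty V with hV | hV
  · simp only [hypersphereNumber_of_isEmpty, max_self]
  simp only [hypersphereNumber_eq_sInf_hypersphereRadii]
  exact csInf_eq_max_of_max_mem ⟨_, one_half_mem_hypersphereRadii⟩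
    ⟨_, one_half_mem_hypersphereRadii⟩ bddBelow_hypersphereRadii bddBelow_hypersphereRadii
    (hypersphereRadii_anti le_sup_left) (hypersphereRadii_anti le_sup_right)
    fun _ h₁ _ h₂ => mem_hypersphereRadii_sup hcover hE₁ hE₂ hclique h₁ h₂
      (le_max_left _ _) (le_max_right _ _)
end

section
/- Let G be a graph and i a vertex with nonempty neighborhood N(i). Then the hypersphere number of the induced subgraph on N(i) satisfies t(G[N(i)]) ≤ 1 − 1/(4·t(G)). -/
/-!
If `u` is a hypersphere representation of `G` with squared radius `t`, then
`⟪u v, u j⟫ = t - 1/2` for every neighbour `j` of `v`, so the neighbours all have the same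
component `((2t - 1) / (2t)) • u v` along `u v`. Subtracting it translates `N(v)` into the
hyperplane orthogonal to `u v`, which keeps unit distances and leaves squared radius
`1 - 1 / (4t)`. Hence `t(G[N(v)]) ≤ 1 - 1 / (4t)` for every admissible `t`, and since
`t ↦ 1 - 1 / (4t)` is increasing this passes to the infimum `t(G)`.
-/

open scoped RealInnerProductSpace

lemma Orthonormal.norm_sub_sq {ι E : Type*} [NormedAddCommGroup E] [InnerProductSpace ℝ E]
    {v : ι → E} (hv : Orthonormal ℝ v) {i j : ι} (hij : i ≠ j) : ‖v i - v j‖ ^ 2 = 2 := by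
  rw [norm_sub_sq_real, hv.1 i, hv.1 j, hv.2 hij]
  norm_num

namespace IsHypersphereRep

variable {V : Type*} {G : SimpleGraph V} {d : ℕ} {u : V → EuclideanSpace ℝ (Fin d)} {t : ℝ}

theorem nonneg (hu : IsHypersphereRep G u t) (i : V) : 0 ≤ t :=
  hu.2 i ▸ sq_nonneg _

theorem inner_eq_of_adj (hu : IsHypersphereRep G u t) {i j : V} (hij : G.Adj i j) :
    ⟪u i, u j⟫ = t - 1 / 2 := by
  have h := norm_sub_sq_real (u i) (u j)
  rw [hu.1 i j hij, hu.2 i, hu.2 j] at h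
  linarith

theorem quarter_le_of_adj (hu : IsHypersphereRep G u t) {i j : V} (hij : G.Adj i j) :
    1 / 4 ≤ t := by
  have := real_inner_mul_inner_self_le (u i) (u j)
  rw [hu.inner_eq_of_adj hij, real_inner_self_eq_norm_sq, real_inner_self_eq_norm_sq, hu.2 i,
    hu.2 j] at this
  nlinarith

theorem pos_of_adj (hu : IsHypersphereRep G u t) {i j : V} (hij : G.Adj i j) : 0 < t := by
  linarith [hu.quarter_le_of_adj hij]

theorem induce_neighborSet (hu : IsHypersphereRep G u t) (v : V) :
    IsHypersphereRep (G.induce (G.neighborSet v))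
      (fun j => u j - ((2 * t - 1) / (2 * t)) • u v) (1 - 1 / (4 * t)) := by
  refine ⟨fun i j hij => by simpa using hu.1 i j hij, fun j => ?_⟩
  have ht := hu.pos_of_adj j.2
  rw [norm_sub_sq_real, real_inner_smul_right, real_inner_comm, hu.inner_eq_of_adj j.2,
    norm_smul, mul_pow, Real.norm_eq_abs, sq_abs, hu.2, hu.2]
  field_simp
  ring

end IsHypersphereRep

theorem exists_isHypersphereRep_half {V : Type*} [Finite V] (G : SimpleGraph V) :
    ∃ (d : ℕ) (u : V → EuclideanSpace ℝ (Fin d)), IsHypersphereRep G u (1 / 2) := by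
  obtain ⟨d, ⟨e⟩⟩ := Finite.exists_equiv_fin V
  have he : Orthonormal ℝ fun i => EuclideanSpace.single (e i) (1 : ℝ) :=
    EuclideanSpace.orthonormal_single.comp e e.injective
  refine ⟨d, fun i => √(1 / 2) • EuclideanSpace.single (e i) (1 : ℝ), fun i j hij => ?_, fun i => ?_⟩
  · rw [← smul_sub, norm_smul, ← pow_eq_one_iff_of_nonneg (by positivity) two_ne_zero, mul_pow,
      he.norm_sub_sq (G.ne_of_adj hij), Real.norm_eq_abs, sq_abs, Real.sq_sqrt (by norm_num)]
    norm_num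
  · rw [norm_smul, mul_pow, he.1 i, Real.norm_eq_abs, sq_abs, Real.sq_sqrt (by norm_num)]
    norm_num

theorem hypersphereNumber_le {V : Type*} [Nonempty V] {G : SimpleGraph V} {d : ℕ}
    {u : V → EuclideanSpace ℝ (Fin d)} {t : ℝ} (hu : IsHypersphereRep G u t) :
    hypersphereNumber G ≤ t :=
  csInf_le ⟨0, fun _ ⟨_, _, hs⟩ => hs.nonneg (Classical.arbitrary V)⟩ ⟨d, u, hu⟩

theorem le_one_sub_one_div_four_mul_csInf {S : Set ℝ} {a : ℝ} (hne : S.Nonempty)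
    (hpos : ∀ t ∈ S, 0 < t) (ha : ∀ t ∈ S, a ≤ 1 - 1 / (4 * t)) :
    a ≤ 1 - 1 / (4 * sInf S) := by
  have hinv : ∀ t ∈ S, 1 / (4 * t) ≤ 1 - a := fun t ht => by linarith [ha t ht]
  obtain ⟨t₀, ht₀⟩ := hne
  have ha₁ : 0 < 1 - a := lt_of_lt_of_le (by have := hpos t₀ ht₀; positivity) (hinv t₀ ht₀)
  have hinf : 1 / (4 * (1 - a)) ≤ sInf S := le_csInf ⟨t₀, ht₀⟩ fun t ht => by
    have h := hinv t ht
    have := hpos t ht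
    rw [div_le_iff₀ (by positivity)] at h ⊢
    nlinarith
  have : 0 < sInf S := lt_of_lt_of_le (by positivity) hinf
  rw [div_le_iff₀ (by positivity)] at hinf
  suffices 1 / (4 * sInf S) ≤ 1 - a by linarith
  rw [div_le_iff₀ (by positivity)]
  linarith

/-- Neighborhood bound: `t(G[N(v)]) ≤ 1 − 1/(4 t(G))` for a vertex `v` with nonempty
neighborhood. -/
theorem hypersphereNumber_neighborhood {V : Type*} [Fintype V]
    (G : SimpleGraph V) (v : V) (hv : (G.neighborSet v).Nonempty) :
    hypersphereNumber (SimpleGraph.induce (G.neighborSet v) G)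
      ≤ 1 - 1 / (4 * hypersphereNumber G) := by
  obtain ⟨j, hj⟩ := hv
  have : Nonempty (G.neighborSet v) := ⟨⟨j, hj⟩⟩
  -- without a representation of `G`, `hypersphereNumber G` would be the junk value `sInf ∅ = 0`
  obtain ⟨d, u, hu⟩ := exists_isHypersphereRep_half G
  exact le_one_sub_one_div_four_mul_csInf ⟨_, d, u, hu⟩ (fun _ ⟨_, _, hs⟩ => hs.pos_of_adj hj)
    fun _ ⟨_, _, hs⟩ => hypersphereNumber_le (hs.induce_neighborSet v)
end
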